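/- arXiv:2301.11237 — 8 statements merged into one kernel-verified Lean document; each statement's English description precedes it below -/
import Mathlib

section
/- Let G_ℓ, G_h be CDFs on [0,1] with dG_h/dG_ℓ(q) = q/(1−q) and G = (G_ℓ+G_h)/2. Then G_h(q) ≤ 2q·G(q) and |G_ℓ(q) − 2G(q)| ≤ 3q·G(q) for all q ∈ [0,1]; in particular lim_{q→0} G_h(q)/G(q) = 0 and lim_{q→0} G_ℓ(q)/G(q) = 2 (whenever G(q) > 0 for q > 0). -/
open MeasureTheory Set Filter

/-- With `Gℓ, Gh` CDFs on `[0,1]`, `dGh/dGℓ (q) = q/(1-q)`, and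
`G = (Gℓ+Gh)/2`: `Gh q ≤ 2q·G q` and `|Gℓ q − 2 G q| ≤ 3q·G q` on `[0,1]`;
in particular, whenever `G q > 0` for `q > 0`, `Gh q / G q → 0` and
`Gℓ q / G q → 2` as `q → 0⁺`. -/
theorem stmt1 (μℓ μh : Measure ℝ) [IsProbabilityMeasure μℓ] [IsProbabilityMeasure μh]
    (hsupp : μℓ (Set.Icc (0:ℝ) 1)ᶜ = 0)
    (hRN : μh = μℓ.withDensity fun q => ENNReal.ofReal (q / (1 - q)))
    (Gℓ Gh G : ℝ → ℝ)
    (hGℓ : ∀ q, Gℓ q = (μℓ (Set.Iic q)).toReal)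
    (hGh : ∀ q, Gh q = (μh (Set.Iic q)).toReal)
    (hG : ∀ q, G q = (Gℓ q + Gh q) / 2) :
    (∀ q ∈ Set.Icc (0:ℝ) 1,
      Gh q ≤ 2 * q * G q ∧ |Gℓ q - 2 * G q| ≤ 3 * q * G q) ∧
    ((∀ q : ℝ, 0 < q → 0 < G q) →
      Tendsto (fun q => Gh q / G q) (nhdsWithin 0 (Set.Ioi 0)) (nhds 0) ∧
      Tendsto (fun q => Gℓ q / G q) (nhdsWithin 0 (Set.Ioi 0)) (nhds 2)) := by
  have hGh0 : ∀ q, 0 ≤ Gh q := fun q => (hGh q) ▸ ENNReal.toReal_nonneg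
  have hGℓ0 : ∀ q, 0 ≤ Gℓ q := fun q => (hGℓ q) ▸ ENNReal.toReal_nonneg
  have key : ∀ q : ℝ, 0 ≤ q → q ≤ 1 → (1 - q) * Gh q ≤ q * Gℓ q := by
    intro q hq0 hq1
    rcases eq_or_lt_of_le hq1 with rfl | hq1
    · simpa using mul_nonneg hq0 (hGℓ0 1)
    · have hden : (0:ℝ) < 1 - q := by linarith
      have hμ : μh (Set.Iic q) ≤ ENNReal.ofReal (q / (1 - q)) * μℓ (Set.Iic q) := by
        rw [hRN, withDensity_apply _ measurableSet_Iic]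
        calc ∫⁻ x in Set.Iic q, ENNReal.ofReal (x / (1 - x)) ∂μℓ
            ≤ ∫⁻ _ in Set.Iic q, ENNReal.ofReal (q / (1 - q)) ∂μℓ := by
              apply setLIntegral_mono' measurableSet_Iic
              intro x hx
              apply ENNReal.ofReal_le_ofReal
              simp only [Set.mem_Iic] at hx
              have hx1 : (0:ℝ) < 1 - x := by linarith
              rw [div_le_div_iff₀ hx1 hden]
              nlinarith
          _ = ENNReal.ofReal (q / (1 - q)) * μℓ (Set.Iic q) := by
              simp [Measure.restrict_apply, mul_comm]
      have hfin : ENNReal.ofReal (q / (1 - q)) * μℓ (Set.Iic q) ≠ ⊤ :=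
        ENNReal.mul_ne_top ENNReal.ofReal_ne_top (measure_ne_top _ _)
      have hmono := ENNReal.toReal_mono hfin hμ
      rw [ENNReal.toReal_mul, ENNReal.toReal_ofReal (div_nonneg hq0 hden.le)] at hmono
      rw [← hGh q, ← hGℓ q] at hmono
      rw [div_mul_eq_mul_div, le_div_iff₀ hden] at hmono
      nlinarith [hmono]
  have main : ∀ q ∈ Set.Icc (0:ℝ) 1,
      Gh q ≤ 2 * q * G q ∧ |Gℓ q - 2 * G q| ≤ 3 * q * G q := by
    rintro q ⟨hq0, hq1⟩
    have hk := key q hq0 hq1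
    have hGe : G q = (Gℓ q + Gh q) / 2 := hG q
    have h1 : Gh q ≤ 2 * q * G q := by rw [hGe]; nlinarith [hk]
    refine ⟨h1, ?_⟩
    have heq : Gℓ q - 2 * G q = -Gh q := by rw [hGe]; ring
    rw [heq, abs_neg, abs_of_nonneg (hGh0 q)]
    have hqG : 0 ≤ q * G q :=
      mul_nonneg hq0 (by rw [hGe]; linarith [hGℓ0 q, hGh0 q])
    nlinarith [h1, hqG]
  refine ⟨main, fun hpos => ?_⟩
  have hub : ∀ᶠ q in nhdsWithin (0:ℝ) (Set.Ioi 0), Gh q / G q ≤ 2 * q := by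
    filter_upwards [Ioo_mem_nhdsGT_of_mem (by norm_num : (0:ℝ) ∈ Set.Ico (0:ℝ) 1)] with q hq
    have h := (main q ⟨hq.1.le, hq.2.le⟩).1
    rw [div_le_iff₀ (hpos q hq.1)]
    linarith [h]
  have hlb : ∀ᶠ q in nhdsWithin (0:ℝ) (Set.Ioi 0), 0 ≤ Gh q / G q := by
    filter_upwards [self_mem_nhdsWithin] with q hq
    exact div_nonneg (hGh0 q) (hpos q hq).le
  have hlim2q : Tendsto (fun q : ℝ => 2 * q) (nhdsWithin 0 (Set.Ioi 0)) (nhds 0) := by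
    have : Tendsto (fun q : ℝ => 2 * q) (nhds 0) (nhds (2 * 0)) :=
      (continuous_const.mul continuous_id).tendsto 0
    simpa using this.mono_left nhdsWithin_le_nhds
  have h0 : Tendsto (fun q => Gh q / G q) (nhdsWithin 0 (Set.Ioi 0)) (nhds 0) :=
    squeeze_zero' hlb hub hlim2q
  refine ⟨h0, ?_⟩
  have heq : ∀ᶠ q in nhdsWithin (0:ℝ) (Set.Ioi 0),
      2 - Gh q / G q = Gℓ q / G q := by
    filter_upwards [self_mem_nhdsWithin] with q hq
    have hg : G q ≠ 0 := (hpos q hq).ne'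
    have hℓ : Gℓ q = 2 * G q - Gh q := by have := hG q; linarith
    rw [hℓ, sub_div, mul_div_assoc, div_self hg, mul_one]
  have : Tendsto (fun q => 2 - Gh q / G q) (nhdsWithin 0 (Set.Ioi 0)) (nhds 2) := by
    have : Tendsto (fun q => (2:ℝ) - Gh q / G q) (nhdsWithin 0 (Set.Ioi 0)) (nhds (2 - 0)) := tendsto_const_nhds.sub h0
    simpa using this
  exact Tendsto.congr' heq this
end

section
/- Let G: [0,1] → [0,∞) be nondecreasing with c·q^α ≤ G(q) ≤ C·q^α for constants 0 < c ≤ C and α > 0, and set m = (c/(2C))^{1/α}. Then ∫₀^q G(x)dx ≤ (1 − m/2)·q·G(q) for all q ∈ (0,1]. -/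
open Set

/-- If `G : [0,1] → [0,∞)` is nondecreasing with
`c·q^α ≤ G q ≤ C·q^α` (`0 < c ≤ C`, `α > 0`) and `m = (c/(2C))^(1/α)`, then
`∫₀^q G ≤ (1 − m/2)·q·G q` for all `q ∈ (0,1]`. -/
theorem stmt3 (G : ℝ → ℝ) (α c C m : ℝ)
    (hα : 0 < α) (hc : 0 < c) (hcC : c ≤ C)
    (hmono : MonotoneOn G (Set.Icc (0:ℝ) 1))
    (hpos : ∀ q ∈ Set.Icc (0:ℝ) 1, 0 ≤ G q)
    (hlb : ∀ q ∈ Set.Icc (0:ℝ) 1, c * q ^ α ≤ G q)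
    (hub : ∀ q ∈ Set.Icc (0:ℝ) 1, G q ≤ C * q ^ α)
    (hm : m = (c / (2 * C)) ^ (1 / α)) :
    ∀ q ∈ Set.Ioc (0:ℝ) 1, (∫ x in (0:ℝ)..q, G x) ≤ (1 - m / 2) * q * G q := by
  intro q hq
  obtain ⟨hq0, hq1⟩ := hq
  have hC : 0 < C := lt_of_lt_of_le hc hcC
  have hbase : 0 < c / (2 * C) := by positivity
  have hm0 : 0 < m := by rw [hm]; exact Real.rpow_pos_of_pos hbase _
  have hm1 : m ≤ 1 := by
    rw [hm]
    exact Real.rpow_le_one hbase.le (by rw [div_le_one (by positivity)]; linarith)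
      (by positivity)
  have hmα : m ^ α = c / (2 * C) := by
    rw [hm, ← Real.rpow_mul hbase.le, one_div_mul_cancel hα.ne', Real.rpow_one]
  set t := m * q with ht
  have ht0 : 0 < t := by positivity
  have htq : t ≤ q := by nlinarith
  have ht1 : t ≤ 1 := le_trans htq hq1
  have htmem : t ∈ Set.Icc (0:ℝ) 1 := ⟨ht0.le, ht1⟩
  have hqmem : q ∈ Set.Icc (0:ℝ) 1 := ⟨hq0.le, hq1⟩
  have hGt : G t ≤ G q / 2 := by
    have h1 := hub t htmem
    have h2 := hlb q hqmem
    have h3 : t ^ α = (c / (2 * C)) * q ^ α := by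
      rw [ht, Real.mul_rpow hm0.le hq0.le, hmα]
    rw [h3] at h1
    have : C * (c / (2 * C) * q ^ α) = (c * q ^ α) / 2 := by
      field_simp
    linarith [this ▸ h1]
  -- integrability
  have hint : ∀ a b : ℝ, 0 ≤ a → a ≤ b → b ≤ 1 → IntervalIntegrable G MeasureTheory.volume a b := by
    intro a b ha hab hb
    exact (hmono.mono (by rw [Set.uIcc_of_le hab]; exact Set.Icc_subset_Icc ha hb)).intervalIntegrable
  have hi1 : IntervalIntegrable G MeasureTheory.volume 0 t := hint 0 t le_rfl ht0.le ht1
  have hi2 : IntervalIntegrable G MeasureTheory.volume t q := hint t q ht0.le htq hq1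
  have hsplit : (∫ x in (0:ℝ)..q, G x) = (∫ x in (0:ℝ)..t, G x) + ∫ x in t..q, G x :=
    (intervalIntegral.integral_add_adjacent_intervals hi1 hi2).symm
  have hI1 : (∫ x in (0:ℝ)..t, G x) ≤ t * G t := by
    have := intervalIntegral.integral_mono_on ht0.le hi1 intervalIntegrable_const
      (fun x hx => hmono ⟨hx.1, le_trans hx.2 ht1⟩ htmem hx.2)
    simpa using this
  have hI2 : (∫ x in t..q, G x) ≤ (q - t) * G q := by
    have := intervalIntegral.integral_mono_on htq hi2 intervalIntegrable_const
      (fun x hx => hmono ⟨le_trans ht0.le hx.1, le_trans hx.2 hq1⟩ hqmem hx.2)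
    simpa using this
  have hGq : 0 ≤ G q := hpos q hqmem
  rw [hsplit]
  nlinarith [mul_le_mul_of_nonneg_left hGt ht0.le]
end

section
/- Define U(r) = log[(1−F_h(1/(1+e^r)))/(1−F_ℓ(1/(1+e^r)))], where F_ℓ, F_h are CDFs on [0,1] with dF_h/dF_ℓ(q) = q/(1−q), F = (F_ℓ+F_h)/2 and F(q) = Θ(q^α) as q → 0 for some α > 0. Then U(r) = Θ(e^{−αr}) as r → ∞, i.e., 0 < liminf_{r→∞} U(r)e^{αr} ≤ limsup_{r→∞} U(r)e^{αr} < ∞; moreover lim_{r→∞} U(r)/(2F(1/(1+e^r))) = 1. -/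
/-!
Write `q = 1 / (1 + e^r)`, `a = Fℓ q` and `b = Fh q`, so that `U r = log ((1 - b) / (1 - a))`,
which lies between `a - b` and `(a - b) / (1 - a)`. The likelihood ratio `x / (1 - x)` is at most
`t = q / (1 - q)` on `Iic q`, so `b ≤ t a`; hence `a - b` and `a + b = 2 F q` differ by a factor
tending to `1`, while `a → 0` by the tail bound. This gives `U r / (2 F q) → 1`. Since
`q e^r ∈ [1/2, 1]` for `r ≥ 0`, the tail bound pins `2 F q · e^{αr}`, hence `U r · e^{αr}`,
between positive constants.
-/

open MeasureTheory Set Filter Real Topology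

lemma sub_le_log_one_sub_div_one_sub {a b : ℝ} (hb : 0 ≤ b) (hba : b ≤ a) (ha : a < 1) :
    a - b ≤ log ((1 - b) / (1 - a)) := by
  have hb1 : 0 < 1 - b := by linarith
  calc a - b ≤ (a - b) / (1 - b) := le_div_self (by linarith) hb1 (by linarith)
    _ = 1 - ((1 - b) / (1 - a))⁻¹ := by field_simp [(by linarith : (1 - a) ≠ 0)]; ring
    _ ≤ log ((1 - b) / (1 - a)) := one_sub_inv_le_log_of_pos (by apply div_pos <;> linarith)

lemma log_one_sub_div_one_sub_le {a b : ℝ} (hba : b ≤ a) (ha : a < 1) :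
    log ((1 - b) / (1 - a)) ≤ (a - b) / (1 - a) := by
  have ha1 : 0 < 1 - a := by linarith
  calc log ((1 - b) / (1 - a)) ≤ (1 - b) / (1 - a) - 1 :=
        log_le_sub_one_of_pos (div_pos (by linarith) ha1)
    _ = (a - b) / (1 - a) := by field_simp; ring

lemma log_one_sub_div_one_sub_div_add_mem {a b t : ℝ} (hb : 0 ≤ b) (hbt : b ≤ t * a)
    (ht0 : 0 ≤ t) (ht : t ≤ 1) (ha : a < 1) (hab : 0 < a + b) :
    (1 - t) / (1 + t) ≤ log ((1 - b) / (1 - a)) / (a + b) ∧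
      log ((1 - b) / (1 - a)) / (a + b) ≤ 1 / (1 - a) := by
  have ha0 : 0 ≤ a := by
    by_contra! ha0
    nlinarith [mul_nonpos_of_nonneg_of_nonpos ht0 ha0.le]
  have hba : b ≤ a := hbt.trans (mul_le_of_le_one_left ha0 ht)
  constructor
  · rw [div_le_div_iff₀ (by linarith) hab]
    nlinarith [sub_le_log_one_sub_div_one_sub hb hba ha]
  · rw [div_le_div_iff₀ hab (by linarith)]
    have := log_one_sub_div_one_sub_le hba ha
    rw [le_div_iff₀ (by linarith)] at this
    linarith

lemma tendsto_log_one_sub_div_one_sub_div_add {ι : Type*} {l : Filter ι} {a b t : ι → ℝ}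
    (ha : Tendsto a l (𝓝 0)) (ht : Tendsto t l (𝓝 0))
    (hbt : ∀ᶠ i in l, 0 ≤ b i ∧ b i ≤ t i * a i ∧ 0 ≤ t i)
    (hab : ∀ᶠ i in l, 0 < a i + b i) :
    Tendsto (fun i => log ((1 - b i) / (1 - a i)) / (a i + b i)) l (𝓝 1) := by
  have hlow : Tendsto (fun i => (1 - t i) / (1 + t i)) l (𝓝 1) := by
    have := ((tendsto_const_nhds (x := (1 : ℝ))).sub ht).div
      ((tendsto_const_nhds (x := (1 : ℝ))).add ht) (by norm_num)
    rwa [sub_zero, add_zero, div_one] at this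
  have hup : Tendsto (fun i => 1 / (1 - a i)) l (𝓝 1) := by
    have := (tendsto_const_nhds (x := (1 : ℝ))).div
      ((tendsto_const_nhds (x := (1 : ℝ))).sub ha) (by norm_num)
    rwa [sub_zero, div_one] at this
  have hbounds := (hbt.and hab).and ((ht.eventually_le_const one_pos).and
    (ha.eventually_lt_const one_pos))
  refine tendsto_of_tendsto_of_tendsto_of_le_of_le' hlow hup ?_ ?_ <;>
    filter_upwards [hbounds] with i ⟨⟨⟨hb, hbt, ht0⟩, hab⟩, ht, ha⟩
  exacts [(log_one_sub_div_one_sub_div_add_mem hb hbt ht0 ht ha hab).1,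
    (log_one_sub_div_one_sub_div_add_mem hb hbt ht0 ht ha hab).2]

lemma tendsto_zero_of_le_mul_rpow {ι : Type*} {l : Filter ι} {f g : ι → ℝ} {α C : ℝ}
    (hα : 0 < α) (hg : Tendsto g l (𝓝 0))
    (hf : ∀ᶠ i in l, 0 ≤ f i ∧ f i ≤ C * g i ^ α) :
    Tendsto f l (𝓝 0) := by
  have hgα : Tendsto (fun i => C * g i ^ α) l (𝓝 0) := by
    simpa [zero_rpow hα.ne'] using (hg.rpow_const (Or.inr hα.le)).const_mul C
  exact squeeze_zero' (hf.mono fun _ => And.left) (hf.mono fun _ => And.right) hgα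

lemma toReal_withDensity_Iic_le (μ : Measure ℝ) [IsFiniteMeasure μ] {q : ℝ}
    (hq0 : 0 ≤ q) (hq1 : q < 1) :
    (μ.withDensity (fun x => ENNReal.ofReal (x / (1 - x))) (Iic q)).toReal ≤
      q / (1 - q) * (μ (Iic q)).toReal := by
  have hle : μ.withDensity (fun x => ENNReal.ofReal (x / (1 - x))) (Iic q) ≤
      ENNReal.ofReal (q / (1 - q)) * μ (Iic q) := by
    rw [withDensity_apply _ measurableSet_Iic, ← setLIntegral_const]
    refine setLIntegral_mono measurable_const fun x (hx : x ≤ q) => ENNReal.ofReal_le_ofReal ?_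
    have h : 1 / (1 - x) ≤ 1 / (1 - q) := one_div_le_one_div_of_le (by linarith) (by linarith)
    calc x / (1 - x) = 1 / (1 - x) - 1 := by field_simp [(by linarith : (1 - x) ≠ 0)]; ring
      _ ≤ 1 / (1 - q) - 1 := by linarith
      _ = q / (1 - q) := by field_simp [(by linarith : (1 - q) ≠ 0)]; ring
  have := ENNReal.toReal_mono (ENNReal.mul_ne_top ENNReal.ofReal_ne_top (measure_ne_top μ _)) hle
  rwa [ENNReal.toReal_mul, ENNReal.toReal_ofReal (div_nonneg hq0 (by linarith))] at this

lemma eventually_bounds_of_tendsto_div {ι : Type*} {l : Filter ι} {u v : ι → ℝ} {m M : ℝ}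
    (hm : 0 < m) (huv : Tendsto (fun i => u i / v i) l (𝓝 1))
    (hv : ∀ᶠ i in l, m ≤ v i ∧ v i ≤ M) :
    ∀ᶠ i in l, m / 2 ≤ u i ∧ u i ≤ 2 * M := by
  filter_upwards [hv, huv.eventually (Icc_mem_nhds (by norm_num : (1 / 2 : ℝ) < 1)
    (by norm_num : (1 : ℝ) < 2))] with i ⟨hmv, hvM⟩ ⟨hlo, hhi⟩
  have hv0 : 0 < v i := hm.trans_le hmv
  have hu : u i = u i / v i * v i := (div_mul_cancel₀ _ hv0.ne').symm
  constructor <;> rw [hu] <;> nlinarith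

lemma tendsto_one_div_one_add_exp_atTop :
    Tendsto (fun r => 1 / (1 + exp r)) atTop (𝓝 0) :=
  (tendsto_atTop_add_const_left _ 1 tendsto_exp_atTop).inv_tendsto_atTop.congr
    fun _ => (one_div _).symm

lemma rpow_one_div_one_add_exp_mul_exp_mem {α r : ℝ} (hα : 0 ≤ α) (hr : 0 ≤ r) :
    (1 / 2) ^ α ≤ (1 / (1 + exp r)) ^ α * exp (α * r) ∧
      (1 / (1 + exp r)) ^ α * exp (α * r) ≤ 1 := by
  have he : 1 ≤ exp r := one_le_exp hr
  rw [mul_comm α, exp_mul, ← mul_rpow (by positivity) (exp_pos r).le]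
  have hx : 1 / (1 + exp r) * exp r ∈ Icc (1 / 2 : ℝ) 1 := by
    constructor
    · rw [one_div_mul_eq_div, le_div_iff₀ (by positivity)]; linarith
    · rw [one_div_mul_eq_div, div_le_one (by positivity)]; linarith
  exact ⟨rpow_le_rpow (by norm_num) hx.1 hα, rpow_le_one (by linarith [hx.1]) hx.2 hα⟩

lemma eventually_mul_exp_mem_of_rpow_bounds {G : ℝ → ℝ} {α c C : ℝ}
    (hα : 0 ≤ α) (hc : 0 ≤ c)
    (hG : ∀ᶠ r in atTop,
      c * (1 / (1 + exp r)) ^ α ≤ G r ∧ G r ≤ C * (1 / (1 + exp r)) ^ α) :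
    ∀ᶠ r in atTop, c * (1 / 2) ^ α ≤ G r * exp (α * r) ∧ G r * exp (α * r) ≤ C := by
  filter_upwards [hG, eventually_ge_atTop 0] with r ⟨hcG, hGC⟩ hr
  obtain ⟨hlo, hhi⟩ := rpow_one_div_one_add_exp_mul_exp_mem hα hr
  have he := exp_pos (α * r)
  have hcC : c ≤ C := le_of_mul_le_mul_right (hcG.trans hGC) (by positivity)
  constructor <;> nlinarith [mul_le_mul_of_nonneg_right hcG he.le,
    mul_le_mul_of_nonneg_right hGC he.le]

lemma exists_bounds_mul_exp_of_tendsto_div {U G : ℝ → ℝ} {α c C : ℝ}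
    (hα : 0 ≤ α) (hc : 0 < c)
    (hUG : Tendsto (fun r => U r / G r) atTop (𝓝 1))
    (hG : ∀ᶠ r in atTop,
      c * (1 / (1 + exp r)) ^ α ≤ G r ∧ G r ≤ C * (1 / (1 + exp r)) ^ α) :
    ∃ c' C' : ℝ, 0 < c' ∧ c' ≤ C' ∧ ∀ᶠ r in atTop,
      c' ≤ U r * exp (α * r) ∧ U r * exp (α * r) ≤ C' := by
  have huv : Tendsto (fun r => U r * exp (α * r) / (G r * exp (α * r))) atTop (𝓝 1) :=
    hUG.congr fun r => (mul_div_mul_right _ _ (exp_pos _).ne').symm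
  have hU := eventually_bounds_of_tendsto_div (by positivity) huv
    (eventually_mul_exp_mem_of_rpow_bounds hα hc.le hG)
  obtain ⟨r, hr⟩ := hU.exists
  exact ⟨_, _, by positivity, hr.1.trans hr.2, hU⟩

theorem stmt6_general (μℓ μh : Measure ℝ) [IsProbabilityMeasure μℓ]
    (hRN : μh = μℓ.withDensity fun q => ENNReal.ofReal (q / (1 - q)))
    (Fℓ Fh F : ℝ → ℝ)
    (hFℓ : ∀ q, Fℓ q = (μℓ (Set.Iic q)).toReal)
    (hFh : ∀ q, Fh q = (μh (Set.Iic q)).toReal)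
    (hF : ∀ q, F q = (Fℓ q + Fh q) / 2)
    (α : ℝ) (hα : 0 < α)
    (htail : ∃ c C q₀ : ℝ, 0 < c ∧ c ≤ C ∧ 0 < q₀ ∧
      ∀ q ∈ Set.Ioo (0:ℝ) q₀, c * q ^ α ≤ F q ∧ F q ≤ C * q ^ α)
    (U : ℝ → ℝ)
    (hU : ∀ r, U r = Real.log
      ((1 - Fh (1 / (1 + Real.exp r))) / (1 - Fℓ (1 / (1 + Real.exp r))))) :
    (∃ c C : ℝ, 0 < c ∧ c ≤ C ∧ ∀ᶠ r in atTop,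
      c ≤ U r * Real.exp (α * r) ∧ U r * Real.exp (α * r) ≤ C) ∧
    Tendsto (fun r => U r / (2 * F (1 / (1 + Real.exp r)))) atTop (nhds 1) := by
  obtain ⟨c, C, q₀, hc, -, hq₀, htail⟩ := htail
  set q : ℝ → ℝ := fun r => 1 / (1 + exp r)
  have hq : Tendsto q atTop (𝓝 0) := tendsto_one_div_one_add_exp_atTop
  have hq_pos (r : ℝ) : 0 < q r := by positivity
  have hq_lt_one (r : ℝ) : q r < 1 := (div_lt_one (by positivity)).2 (by linarith [exp_pos r])
  have hFℓ_nonneg (x : ℝ) : 0 ≤ Fℓ x := hFℓ x ▸ ENNReal.toReal_nonneg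
  have hFh_nonneg (x : ℝ) : 0 ≤ Fh x := hFh x ▸ ENNReal.toReal_nonneg
  have hFq : ∀ᶠ r in atTop, c * q r ^ α ≤ F (q r) ∧ F (q r) ≤ C * q r ^ α := by
    filter_upwards [hq.eventually_lt_const hq₀] with r hr using htail _ ⟨hq_pos r, hr⟩
  have hFℓq : Tendsto (fun r => Fℓ (q r)) atTop (𝓝 0) := by
    refine tendsto_zero_of_le_mul_rpow (C := 2 * C) hα hq ?_
    filter_upwards [hFq] with r ⟨_, hr⟩
    exact ⟨hFℓ_nonneg _, by linarith [hF (q r), hFh_nonneg (q r)]⟩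
  have ht : Tendsto (fun r => q r / (1 - q r)) atTop (𝓝 0) := by
    have := hq.div ((tendsto_const_nhds (x := (1 : ℝ))).sub hq) (by norm_num)
    rwa [zero_div] at this
  have hratio : Tendsto (fun r => U r / (2 * F (q r))) atTop (𝓝 1) := by
    refine (tendsto_log_one_sub_div_one_sub_div_add (b := fun r => Fh (q r)) hFℓq ht ?_ ?_).congr
      fun r => by rw [hU, hF, mul_div_cancel₀ _ two_ne_zero]
    · refine .of_forall fun r =>
        ⟨hFh_nonneg _, ?_, (div_pos (hq_pos r) (sub_pos.2 (hq_lt_one r))).le⟩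
      rw [hFh, hFℓ, hRN]
      exact toReal_withDensity_Iic_le μℓ (hq_pos r).le (hq_lt_one r)
    · filter_upwards [hFq] with r ⟨hr, _⟩
      linarith [hF (q r), mul_pos hc (rpow_pos_of_pos (hq_pos r) α)]
  refine ⟨exists_bounds_mul_exp_of_tendsto_div hα.le (by positivity : 0 < 2 * c) (C := 2 * C)
    hratio (hFq.mono fun r h => ?_), hratio⟩
  rw [mul_assoc, mul_assoc]
  exact ⟨mul_le_mul_of_nonneg_left h.1 zero_le_two, mul_le_mul_of_nonneg_left h.2 zero_le_two⟩

/-- For `U(r) = log[(1−Fh(1/(1+e^r)))/(1−Fℓ(1/(1+e^r)))]`, with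
`Fℓ, Fh` CDFs on `[0,1]`, `dFh/dFℓ (q) = q/(1−q)`, `F = (Fℓ+Fh)/2` and
`F(q) = Θ(q^α)` as `q → 0` (`α > 0`): `U(r) = Θ(e^{−αr})` as `r → ∞`, and
`U(r)/(2F(1/(1+e^r))) → 1`. -/
theorem stmt6 (μℓ μh : Measure ℝ) [IsProbabilityMeasure μℓ] [IsProbabilityMeasure μh]
    (hsupp : μℓ (Set.Icc (0:ℝ) 1)ᶜ = 0)
    (hRN : μh = μℓ.withDensity fun q => ENNReal.ofReal (q / (1 - q)))
    (Fℓ Fh F : ℝ → ℝ)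
    (hFℓ : ∀ q, Fℓ q = (μℓ (Set.Iic q)).toReal)
    (hFh : ∀ q, Fh q = (μh (Set.Iic q)).toReal)
    (hF : ∀ q, F q = (Fℓ q + Fh q) / 2)
    (α : ℝ) (hα : 0 < α)
    (htail : ∃ c C q₀ : ℝ, 0 < c ∧ c ≤ C ∧ 0 < q₀ ∧
      ∀ q ∈ Set.Ioo (0:ℝ) q₀, c * q ^ α ≤ F q ∧ F q ≤ C * q ^ α)
    (U : ℝ → ℝ)
    (hU : ∀ r, U r = Real.log
      ((1 - Fh (1 / (1 + Real.exp r))) / (1 - Fℓ (1 / (1 + Real.exp r))))) :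
    (∃ c C : ℝ, 0 < c ∧ c ≤ C ∧ ∀ᶠ r in atTop,
      c ≤ U r * Real.exp (α * r) ∧ U r * Real.exp (α * r) ≤ C) ∧
    Tendsto (fun r => U r / (2 * F (1 / (1 + Real.exp r)))) atTop (nhds 1) :=
  stmt6_general μℓ μh hRN Fℓ Fh F hFℓ hFh hF α hα htail U hU
end

section
/- Let Ũ: [0,∞) → (0,∞) satisfy Ũ(r) ≤ C·e^{−α̃r} for all r ≥ r̄ (some C > 0, α̃ > 0, r̄ ≥ 0), and suppose z ↦ z + C·e^{−α̃z} is increasing on [r̄, ∞). Define r_{n+1} = r_n + Ũ(r_n) with r_N ≥ r̄ for some N. Then limsup_{n→∞} e^{r_n}/n^{1/α̃} < ∞. -/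
open Filter

/-- Upper envelope: If `Ut : [0,∞) → (0,∞)` satisfies
`Ut r ≤ C·e^{−αt·r}` for `r ≥ rb`, `z ↦ z + C·e^{−αt·z}` is increasing on `[rb,∞)`,
and `r_{n+1} = r_n + Ut (r_n)` with `r_N ≥ rb`, then
`limsup e^{r_n}/n^{1/αt} < ∞`, i.e. `e^{r_n}/n^{1/αt}` is eventually bounded. -/
theorem stmt8 (Ut : ℝ → ℝ) (C αt rb : ℝ) (r : ℕ → ℝ) (N : ℕ)
    (hC : 0 < C) (hαt : 0 < αt) (hrb : 0 ≤ rb)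
    (hUpos : ∀ x, 0 ≤ x → 0 < Ut x)
    (hUub : ∀ x, rb ≤ x → Ut x ≤ C * Real.exp (-αt * x))
    (hmap : MonotoneOn (fun z => z + C * Real.exp (-αt * z)) (Set.Ici rb))
    (hr0 : 0 ≤ r 0)
    (hrec : ∀ n, r (n + 1) = r n + Ut (r n))
    (hN : rb ≤ r N) :
    ∃ M : ℝ, ∀ᶠ n : ℕ in atTop, Real.exp (r n) / (n : ℝ) ^ (1 / αt) ≤ M := by
  have hpos : ∀ n, 0 ≤ r n := by
    intro n
    induction n with
    | zero => exact hr0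
    | succ k ih =>
      have := hUpos (r k) ih
      rw [hrec]; linarith
  have hge : ∀ m, rb ≤ r (N + m) := by
    intro m
    induction m with
    | zero => simpa using hN
    | succ k ih =>
      have h1 : r (N + k) ≤ r (N + k + 1) := by
        have := hUpos _ (hpos (N + k))
        rw [hrec]; linarith
      calc rb ≤ r (N + k) := ih
        _ ≤ r (N + (k + 1)) := by rw [← Nat.add_assoc]; exact h1
  set K := αt * C * Real.exp (αt * C) with hK
  have hKpos : 0 < K := by positivity
  set A := Real.exp (αt * r N) with hA
  have hApos : 0 < A := Real.exp_pos _
  have step : ∀ n, rb ≤ r n → Real.exp (αt * r (n + 1)) ≤ Real.exp (αt * r n) + K := by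
    intro n hrn
    have hU : 0 < Ut (r n) := hUpos _ (hpos n)
    have hUle : Ut (r n) ≤ C * Real.exp (-αt * r n) := hUub _ hrn
    have hE1 : Real.exp (-αt * r n) ≤ 1 := by
      apply Real.exp_le_one_iff.mpr
      nlinarith [hpos n]
    have hUleC : Ut (r n) ≤ C := by nlinarith
    have hEpos : (0:ℝ) < Real.exp (αt * Ut (r n)) := Real.exp_pos _
    have hexpU : Real.exp (αt * Ut (r n)) ≤ 1 + αt * Ut (r n) * Real.exp (αt * Ut (r n)) := by
      have h := Real.add_one_le_exp (-(αt * Ut (r n)))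
      rw [Real.exp_neg] at h
      have h2 : (1 - αt * Ut (r n)) * Real.exp (αt * Ut (r n)) ≤ 1 := by
        have hinv : Real.exp (αt * Ut (r n)) * (Real.exp (αt * Ut (r n)))⁻¹ = 1 :=
          mul_inv_cancel₀ (ne_of_gt hEpos)
        nlinarith
      nlinarith
    have hmulinv : Real.exp (αt * r n) * Real.exp (-αt * r n) = 1 := by
      rw [← Real.exp_add]; ring_nf; exact Real.exp_zero
    have hmul : Real.exp (αt * r n) * (αt * Ut (r n)) ≤ αt * C := by
      have h3 := mul_le_mul_of_nonneg_left hUle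
        (le_of_lt (mul_pos hαt (Real.exp_pos (αt * r n))))
      have h4 : αt * Real.exp (αt * r n) * (C * Real.exp (-αt * r n)) = αt * C := by
        linear_combination αt * C * hmulinv
      linarith
    have hexpUle : Real.exp (αt * Ut (r n)) ≤ Real.exp (αt * C) :=
      Real.exp_le_exp.mpr (by nlinarith)
    have heq : Real.exp (αt * r (n + 1)) = Real.exp (αt * r n) * Real.exp (αt * Ut (r n)) := by
      rw [hrec, ← Real.exp_add]; ring_nf
    rw [heq]
    calc Real.exp (αt * r n) * Real.exp (αt * Ut (r n))
        ≤ Real.exp (αt * r n) * (1 + αt * Ut (r n) * Real.exp (αt * Ut (r n))) :=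
          mul_le_mul_of_nonneg_left hexpU (Real.exp_pos _).le
      _ = Real.exp (αt * r n) + (Real.exp (αt * r n) * (αt * Ut (r n))) * Real.exp (αt * Ut (r n)) := by
          ring
      _ ≤ Real.exp (αt * r n) + (αt * C) * Real.exp (αt * C) := by
          have h1 : 0 ≤ Real.exp (αt * r n) * (αt * Ut (r n)) := by positivity
          nlinarith
      _ = Real.exp (αt * r n) + K := by rw [hK]
  have key : ∀ m : ℕ, Real.exp (αt * r (N + m)) ≤ A + K * m := by
    intro m
    induction m with
    | zero => simp [hA]
    | succ k ih =>
      have h1 := step (N + k) (hge k)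
      have h2 : N + (k + 1) = (N + k) + 1 := by ring
      rw [h2]
      push_cast
      calc Real.exp (αt * r ((N + k) + 1)) ≤ Real.exp (αt * r (N + k)) + K := h1
        _ ≤ A + K * k + K := by linarith
        _ = A + K * (k + 1) := by ring
  refine ⟨(A + K) ^ (1 / αt), ?_⟩
  filter_upwards [eventually_ge_atTop (N + 1)] with n hn
  have hNn : N ≤ n := le_trans (Nat.le_succ N) hn
  have hn1 : 1 ≤ n := le_trans (Nat.le_add_left 1 N) hn
  have hnR : (1:ℝ) ≤ (n:ℝ) := by exact_mod_cast hn1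
  have hkey : Real.exp (αt * r n) ≤ A + K * n := by
    have h := key (n - N)
    rw [Nat.add_sub_cancel' hNn] at h
    have hc : ((n - N : ℕ) : ℝ) ≤ (n : ℝ) := by exact_mod_cast Nat.sub_le n N
    nlinarith
  have hbound : Real.exp (αt * r n) ≤ (A + K) * n := by nlinarith
  have hexp : Real.exp (r n) = (Real.exp (αt * r n)) ^ (1 / αt) := by
    rw [Real.rpow_def_of_pos (Real.exp_pos _), Real.log_exp]
    congr 1
    field_simp
  have hrpow : Real.exp (r n) ≤ ((A + K) * n) ^ (1 / αt) := by
    rw [hexp]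
    exact Real.rpow_le_rpow (Real.exp_pos _).le hbound (by positivity)
  have hsplit : ((A + K) * n) ^ (1 / αt) = (A + K) ^ (1 / αt) * (n:ℝ) ^ (1 / αt) :=
    Real.mul_rpow (by positivity) (by linarith)
  have hnpow : (0:ℝ) < (n:ℝ) ^ (1 / αt) := Real.rpow_pos_of_pos (by linarith) _
  rw [div_le_iff₀ hnpow]
  rw [hsplit] at hrpow
  linarith
end

section
/- Assume α̃ − α < 1 where F_h(q) = Θ(q^{α+1}) and on the high-action path e^{r̃ⁿ_h(r)} = Θ(n^{1/α̃}) with increments bounded below as in the lower-envelope lemma. Then for every ε > 0 there exists r̄ ≥ 0 such that for all initial values r ≥ r̄, ∑_{n≥0} e^{−(α+1)·r̃ⁿ_h(r)} < ε, where r̃ⁿ_h(r) is the sequence defined by r̃¹ = r and r̃^{n+1} = r̃ⁿ + Ũ(r̃ⁿ) with Ũ(r) ≥ c·e^{−α̃r} for r ≥ some threshold. -/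
open Filter Topology Real

/-!
Put `z n = exp (α̃ · r̃ⁿ)`. Since `exp u ≥ 1 + u` and `Ũ(r̃ⁿ) ≥ c e^{-α̃ r̃ⁿ}`, each step raises `z` by at
least `α̃ c`, so `z n ≥ e^{α̃ r} + α̃ c n`. With `p = (α + 1)/α̃ > 1` the terms of the series are
`(z n)^{-p} ≤ (e^{α̃ r} + α̃ c n)^{-p}`, and by dominated convergence the sum of these bounds tends
to `0` as `r → ∞`.
-/

lemma summable_add_mul_rpow_neg {a b p : ℝ} (ha : 0 < a) (hb : 0 < b) (hp : 1 < p) :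
    Summable fun n : ℕ => (a + b * n) ^ (-p) := by
  refine (((Real.summable_one_div_nat_add_rpow (a / b) p).2 hp).mul_left (b ^ (-p))).congr
    fun n => ?_
  have hn : (0 : ℝ) < n + a / b := by positivity
  rw [abs_of_pos hn, one_div, ← rpow_neg hn.le, ← mul_rpow hb.le hn.le, mul_add,
    mul_div_cancel₀ _ hb.ne', add_comm]

lemma tendsto_tsum_add_mul_rpow_neg {b p : ℝ} (hb : 0 < b) (hp : 1 < p) :
    Tendsto (fun a : ℝ => ∑' n : ℕ, (a + b * n) ^ (-p)) atTop (𝓝 0) := by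
  have hterm : ∀ n : ℕ, Tendsto (fun a : ℝ => (a + b * n) ^ (-p)) atTop (𝓝 0) := fun n =>
    (tendsto_rpow_neg_atTop (by linarith)).comp (tendsto_atTop_add_const_right _ _ tendsto_id)
  simpa using tendsto_tsum_of_dominated_convergence (summable_add_mul_rpow_neg one_pos hb hp)
    hterm <| (eventually_ge_atTop 1).mono fun a ha n => by
      have hpos : 0 < 1 + b * n := by positivity
      rw [norm_of_nonneg (rpow_nonneg (by positivity) _)]
      exact rpow_le_rpow_of_nonpos hpos (by linarith) (by linarith)

lemma exp_mul_add_le_exp_mul_add {k c y u : ℝ} (hk : 0 ≤ k) (hu : c * exp (-k * y) ≤ u) :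
    exp (k * y) + k * c ≤ exp (k * (y + u)) := by
  have hcancel : exp (k * y) * exp (-k * y) = 1 := by rw [← exp_add]; simp
  calc exp (k * y) + k * c = exp (k * y) * (1 + k * (c * exp (-k * y))) := by
        linear_combination k * c * hcancel.symm
    _ ≤ exp (k * y) * (1 + k * u) := by gcongr
    _ ≤ exp (k * y) * exp (k * u) := by gcongr; linarith [add_one_le_exp (k * u)]
    _ = exp (k * (y + u)) := by rw [← exp_add, mul_add]

section Recursion

variable {U : ℝ → ℝ} {x : ℕ → ℝ} {k c r₀ : ℝ}

lemma apply_zero_le_of_step (hc : 0 ≤ c) (hU : ∀ y, r₀ ≤ y → c * exp (-k * y) ≤ U y)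
    (hx0 : r₀ ≤ x 0) (hx : ∀ n, x (n + 1) = x n + U (x n)) (n : ℕ) : x 0 ≤ x n := by
  induction n with
  | zero => rfl
  | succ n ih =>
    have hstep := hU (x n) (hx0.trans ih)
    rw [hx]
    linarith [mul_nonneg hc (exp_pos (-k * x n)).le]

lemma exp_mul_add_le_exp_mul_of_step (hk : 0 ≤ k) (hc : 0 ≤ c)
    (hU : ∀ y, r₀ ≤ y → c * exp (-k * y) ≤ U y) (hx0 : r₀ ≤ x 0)
    (hx : ∀ n, x (n + 1) = x n + U (x n)) (n : ℕ) :
    exp (k * x 0) + k * c * n ≤ exp (k * x n) := by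
  induction n with
  | zero => simp
  | succ n ih =>
    have hstep := exp_mul_add_le_exp_mul_add hk
      (hU (x n) (hx0.trans (apply_zero_le_of_step hc hU hx0 hx n)))
    rw [hx, Nat.cast_succ]
    linarith

end Recursion

lemma exp_neg_mul_eq_exp_mul_rpow {k : ℝ} (hk : k ≠ 0) (s y : ℝ) :
    exp (-s * y) = exp (k * y) ^ (-(s / k)) := by
  rw [← exp_mul]
  congr 1
  field_simp

theorem stmt12_general (Ut : ℝ → ℝ) (α αt c r₀ : ℝ) (rt : ℝ → ℕ → ℝ)
    (hαt : 0 < αt) (hcond : αt - α < 1)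
    (hc : 0 < c)
    (hUlb : ∀ x, r₀ ≤ x → c * Real.exp (-αt * x) ≤ Ut x)
    (hinit : ∀ r : ℝ, rt r 0 = r)
    (hrec : ∀ r : ℝ, ∀ n : ℕ, rt r (n + 1) = rt r n + Ut (rt r n)) :
    ∀ ε : ℝ, 0 < ε → ∃ rb : ℝ, 0 ≤ rb ∧ ∀ r : ℝ, rb ≤ r →
      Summable (fun n : ℕ => Real.exp (-(α + 1) * rt r n)) ∧
      (∑' n : ℕ, Real.exp (-(α + 1) * rt r n)) < ε := by
  intro ε hε
  set p := (α + 1) / αt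
  have hp : 1 < p := by rw [lt_div_iff₀ hαt]; linarith
  have hb : 0 < αt * c := mul_pos hαt hc
  have hlim := (tendsto_tsum_add_mul_rpow_neg hb hp).comp
    (tendsto_exp_atTop.comp (tendsto_id.const_mul_atTop hαt))
  obtain ⟨R, hR⟩ := eventually_atTop.1
    ((hlim.eventually (gt_mem_nhds hε)).and (eventually_ge_atTop r₀))
  refine ⟨max R 0, le_max_right _ _, fun r hr => ?_⟩
  obtain ⟨hsmall, hr₀⟩ := hR r (le_of_max_le_left hr)
  have hbound : ∀ n : ℕ, exp (-(α + 1) * rt r n) ≤ (exp (αt * r) + αt * c * n) ^ (-p) := by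
    intro n
    have hgrowth := exp_mul_add_le_exp_mul_of_step hαt.le hc.le hUlb
      ((hinit r).symm ▸ hr₀) (hrec r) n
    rw [hinit] at hgrowth
    rw [exp_neg_mul_eq_exp_mul_rpow hαt.ne']
    exact rpow_le_rpow_of_nonpos (by positivity) hgrowth (by linarith)
  have hsum := summable_add_mul_rpow_neg (exp_pos (αt * r)) hb hp
  have hf := hsum.of_nonneg_of_le (fun n => (exp_pos _).le) hbound
  exact ⟨hf, (hf.tsum_le_tsum hbound hsum).trans_lt hsmall⟩

/-- Assume `αt − α < 1`, and let `rt r` be the misspecified public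
log-likelihood on the all-high-action path started at `r`: `rt r 0 = r`,
`rt r (n+1) = rt r n + Ut (rt r n)`, where `Ut > 0` is decreasing with
`Ut x ≥ c·e^{−αt·x}` for `x ≥ r₀`. Then for every `ε > 0` there is `rb ≥ 0`
such that for all initial values `r ≥ rb`, `∑_{n≥0} e^{−(α+1)·rt r n} < ε`. -/
theorem stmt12 (Ut : ℝ → ℝ) (α αt c r₀ : ℝ) (rt : ℝ → ℕ → ℝ)
    (hα : 0 < α) (hαt : 0 < αt) (hcond : αt - α < 1)
    (hc : 0 < c)
    (hUpos : ∀ x, 0 ≤ x → 0 < Ut x)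
    (hUanti : AntitoneOn Ut (Set.Ici (0:ℝ)))
    (hUlb : ∀ x, r₀ ≤ x → c * Real.exp (-αt * x) ≤ Ut x)
    (hinit : ∀ r : ℝ, rt r 0 = r)
    (hrec : ∀ r : ℝ, ∀ n : ℕ, rt r (n + 1) = rt r n + Ut (rt r n)) :
    ∀ ε : ℝ, 0 < ε → ∃ rb : ℝ, 0 ≤ rb ∧ ∀ r : ℝ, rb ≤ r →
      Summable (fun n : ℕ => Real.exp (-(α + 1) * rt r n)) ∧
      (∑' n : ℕ, Real.exp (-(α + 1) * rt r n)) < ε :=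
  stmt12_general Ut α αt c r₀ rt hαt hcond hc hUlb hinit hrec
end

section
/- Consider the herding model with tail exponents α (true) and α̃ (misspecified). Conditional on the high state, the probability that all agents take the high action, P_h(a_n = h for all n) = ∏_n (1 − F_h(1 − π̃ⁿ_h)), is strictly positive if and only if α̃ − α < 1. -/
/-!
For factors `0 ≤ a n < 1`, `∏ (1 - a n) > 0` iff `∑ a n < ∞`: one direction is
`-log (1 - x) ≥ x`, the other is summability of `log (1 + x)` for summable `x`. Here
`a n = Fh (1 - pt n) ≍ (1 - pt n) ^ (α + 1) ≍ n ^ (-(α + 1) / αt)`, which is summable iff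
`(α + 1) / αt > 1`.
-/

open Filter Topology Asymptotics

namespace Real
variable {ι : Type*} {f : ι → ℝ}

lemma multipliable_of_nonneg_of_le_one (h0 : ∀ i, 0 ≤ f i) (h1 : ∀ i, f i ≤ 1) :
    Multipliable f :=
  ⟨_, tendsto_atTop_ciInf (Finset.prod_anti_set_of_le_one h0 h1)
    ⟨0, by rintro _ ⟨s, rfl⟩; exact Finset.prod_nonneg fun i _ ↦ h0 i⟩⟩

lemma hasSum_log_of_hasProd (hf : ∀ i, 0 < f i) {a : ℝ} (ha : 0 < a) (h : HasProd f a) :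
    HasSum (fun i ↦ log (f i)) (log a) :=
  ((continuousAt_log ha.ne').tendsto.comp h).congr fun _ ↦ log_prod fun i _ ↦ (hf i).ne'

lemma tprod_one_sub_pos_iff (h0 : ∀ i, 0 ≤ f i) (h1 : ∀ i, f i < 1) :
    0 < ∏' i, (1 - f i) ↔ Summable f := by
  have hpos : ∀ i, 0 < 1 - f i := fun i ↦ sub_pos.2 (h1 i)
  constructor
  · intro hprod
    have hmul : Multipliable fun i ↦ 1 - f i :=
      multipliable_of_nonneg_of_le_one (fun i ↦ (hpos i).le) fun i ↦ by linarith [h0 i]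
    have hlog := (hasSum_log_of_hasProd hpos hprod hmul.hasProd).summable
    refine hlog.neg.of_nonneg_of_le h0 fun i ↦ ?_
    linarith [log_le_sub_one_of_pos (hpos i)]
  · intro hf
    have hlog : Summable fun i ↦ log (1 - f i) := by
      simpa [sub_eq_add_neg] using summable_log_one_add_of_summable hf.neg
    rw [← rexp_tsum_eq_tprod hpos hlog]
    exact exp_pos _

end Real

namespace Asymptotics
variable {α : Type*} {l : Filter α} {f g : α → ℝ}

lemma isTheta_of_eventually_le_of_le {c C : ℝ} (hc : 0 < c) (hg : 0 ≤ᶠ[l] g)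
    (h : ∀ᶠ x in l, c * g x ≤ f x ∧ f x ≤ C * g x) : f =Θ[l] g := by
  refine ⟨.of_bound C ?_, .of_bound c⁻¹ ?_⟩ <;> filter_upwards [hg, h] with x hgx ⟨hlo, hhi⟩ <;>
    rw [Real.norm_of_nonneg ((mul_nonneg hc.le hgx).trans hlo), Real.norm_of_nonneg hgx]
  · exact hhi
  · rwa [inv_mul_eq_div, le_div_iff₀ hc, mul_comm]

end Asymptotics

lemma isTheta_comp_natCast_rpow {F : ℝ → ℝ} {q : ℕ → ℝ} {a b : ℝ} (hb : 0 < b)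
    (hF : F =Θ[𝓝[>] 0] fun x ↦ x ^ a) (hq_pos : ∀ n, 0 < q n)
    (hq : q =Θ[atTop] fun n ↦ (n : ℝ) ^ (-b)) :
    (fun n ↦ F (q n)) =Θ[atTop] fun n ↦ (n : ℝ) ^ (-b * a) := by
  have hq_zero : Tendsto q atTop (𝓝[>] 0) := by
    refine tendsto_nhdsWithin_iff.2 ⟨hq.isBigO.trans_tendsto ?_, .of_forall hq_pos⟩
    exact (tendsto_rpow_neg_atTop hb).comp tendsto_natCast_atTop_atTop
  have hFq : (fun n ↦ F (q n)) =Θ[atTop] fun n ↦ q n ^ a :=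
    ⟨hF.1.comp_tendsto hq_zero, hF.2.comp_tendsto hq_zero⟩
  simp_rw [Real.rpow_mul (Nat.cast_nonneg _)]
  exact hFq.trans (hq.rpow (.of_forall fun n ↦ (hq_pos n).le) (.of_forall fun n ↦ by positivity))

theorem stmt14_general (Fh : ℝ → ℝ) (pt : ℕ → ℝ) (α αt : ℝ)
    (hαt : 0 < αt)
    (hFh01 : ∀ q ∈ Set.Icc (0:ℝ) 1, Fh q ∈ Set.Icc (0:ℝ) 1)
    (hFhΘ : ∃ c C q₀ : ℝ, 0 < c ∧ c ≤ C ∧ 0 < q₀ ∧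
      ∀ q ∈ Set.Ioo (0:ℝ) q₀, c * q ^ (α + 1) ≤ Fh q ∧ Fh q ≤ C * q ^ (α + 1))
    (hpt : ∀ n, pt n ∈ Set.Ioo (0:ℝ) 1)
    (hptΘ : ∃ c C : ℝ, 0 < c ∧ c ≤ C ∧ ∀ n : ℕ, 1 ≤ n →
      c * (n : ℝ) ^ (-(1 / αt)) ≤ 1 - pt n ∧ 1 - pt n ≤ C * (n : ℝ) ^ (-(1 / αt)))
    (hlt1 : ∀ n, Fh (1 - pt n) < 1) :
    0 < (∏' n : ℕ, (1 - Fh (1 - pt n))) ↔ αt - α < 1 := by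
  obtain ⟨c, C, q₀, hc, -, hq₀, hFh⟩ := hFhΘ
  obtain ⟨c', C', hc', -, hq⟩ := hptΘ
  have hq_mem : ∀ n, 1 - pt n ∈ Set.Ioo (0 : ℝ) 1 := fun n ↦
    ⟨sub_pos.2 (hpt n).2, by linarith [(hpt n).1]⟩
  have hFh_theta : Fh =Θ[𝓝[>] 0] fun q ↦ q ^ (α + 1) :=
    isTheta_of_eventually_le_of_le hc
      (eventually_nhdsWithin_of_forall fun q hq ↦ Real.rpow_nonneg (le_of_lt hq) _)
      (mem_of_superset (Ioo_mem_nhdsGT hq₀) hFh)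
  have hq_theta : (fun n ↦ 1 - pt n) =Θ[atTop] fun n : ℕ ↦ (n : ℝ) ^ (-(1 / αt)) :=
    isTheta_of_eventually_le_of_le hc' (.of_forall fun n ↦ by positivity)
      (eventually_atTop.2 ⟨1, hq⟩)
  rw [Real.tprod_one_sub_pos_iff (fun n ↦ (hFh01 _ (Set.Ioo_subset_Icc_self (hq_mem n))).1) hlt1,
    (isTheta_comp_natCast_rpow (one_div_pos.2 hαt) hFh_theta (fun n ↦ (hq_mem n).1)
      hq_theta).summable_iff_nat, Real.summable_nat_rpow, neg_mul, one_div_mul_eq_div,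
    neg_lt_neg_iff, one_lt_div hαt, sub_lt_iff_lt_add']

/-- In the herding model with true tail exponent `α` and misspecified
exponent `αt` — i.e. `Fh q = Θ(q^{α+1})` near 0, and the misspecified public beliefs
`pt n` on the all-high-action path satisfy `1 − pt n = Θ(n^{−1/αt})` — the
probability of an immediate good herd in the high state,
`∏_n (1 − Fh (1 − pt n))`, is strictly positive iff `αt − α < 1`. -/
theorem stmt14 (Fh : ℝ → ℝ) (pt : ℕ → ℝ) (α αt : ℝ)
    (hα : 0 < α) (hαt : 0 < αt)
    (hFh01 : ∀ q ∈ Set.Icc (0:ℝ) 1, Fh q ∈ Set.Icc (0:ℝ) 1)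
    (hFhΘ : ∃ c C q₀ : ℝ, 0 < c ∧ c ≤ C ∧ 0 < q₀ ∧
      ∀ q ∈ Set.Ioo (0:ℝ) q₀, c * q ^ (α + 1) ≤ Fh q ∧ Fh q ≤ C * q ^ (α + 1))
    (hpt : ∀ n, pt n ∈ Set.Ioo (0:ℝ) 1)
    (hptΘ : ∃ c C : ℝ, 0 < c ∧ c ≤ C ∧ ∀ n : ℕ, 1 ≤ n →
      c * (n : ℝ) ^ (-(1 / αt)) ≤ 1 - pt n ∧ 1 - pt n ≤ C * (n : ℝ) ^ (-(1 / αt)))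
    (hlt1 : ∀ n, Fh (1 - pt n) < 1) :
    0 < (∏' n : ℕ, (1 - Fh (1 - pt n))) ↔ αt - α < 1 :=
  stmt14_general Fh pt α αt hαt hFh01 hFhΘ hpt hptΘ hlt1
end

section
/- Consider the herding model with tail exponents α (true) and α̃ (misspecified), symmetric signal distributions. For any prior π ∈ (0,1), the probability conditional on the high state that all agents take the low action (immediate wrong herd), ξ(π) = ∏_n (1 − F_ℓ(1 − π̃ⁿ_h(1−π))), equals zero if and only if α̃ ≥ α. -/
/-!
A product `∏ (1 - aₙ)` with `0 ≤ aₙ < 1` vanishes exactly when `∑ aₙ` diverges. Here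
`aₙ = Fℓ (1 - pt n)` with `1 - pt n ≍ n^(-1/αt) → 0` and `Fℓ q ≍ q^α` near `0`, so
`aₙ ≍ n^(-α/αt)`, and this p-series diverges iff `α/αt ≤ 1`.
-/

open Filter Topology Asymptotics

lemma isTheta_of_mul_le_of_le_mul {α : Type*} {l : Filter α} {f g : α → ℝ} {c C : ℝ}
    (hc : 0 < c) (hg : ∀ᶠ x in l, 0 ≤ g x)
    (hfg : ∀ᶠ x in l, c * g x ≤ f x ∧ f x ≤ C * g x) : f =Θ[l] g := by
  have hf : ∀ᶠ x in l, 0 ≤ f x := by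
    filter_upwards [hg, hfg] with x hgx hx using (mul_nonneg hc.le hgx).trans hx.1
  refine ⟨.of_bound C ?_, .of_bound c⁻¹ ?_⟩
  · filter_upwards [hf, hg, hfg] with x hfx hgx hx
    rw [Real.norm_of_nonneg hfx, Real.norm_of_nonneg hgx]
    exact hx.2
  · filter_upwards [hf, hg, hfg] with x hfx hgx hx
    rw [Real.norm_of_nonneg hfx, Real.norm_of_nonneg hgx, le_inv_mul_iff₀ hc]
    exact hx.1

lemma tprod_one_sub_eq_zero_iff_not_summable {ι : Type*} {a : ι → ℝ}
    (ha₀ : ∀ i, 0 ≤ a i) (ha₁ : ∀ i, a i < 1) :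
    ∏' i, (1 - a i) = 0 ↔ ¬ Summable a := by
  constructor
  · intro hprod hsum
    refine tprod_one_add_ne_zero_of_summable (f := fun i => -a i)
      (fun i => by linarith [ha₁ i]) ?_ ?_
    · simpa only [norm_neg, Real.norm_of_nonneg (ha₀ _)] using hsum
    · simpa only [← sub_eq_add_neg] using hprod
  · intro hsum
    have hunbdd : Tendsto (fun s : Finset ι => ∑ i ∈ s, a i) atTop atTop := by
      refine tendsto_atTop_atTop_of_monotone
        (fun s t hst => Finset.sum_le_sum_of_subset_of_nonneg hst fun i _ _ => ha₀ i) ?_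
      by_contra! hbdd
      obtain ⟨b, hb⟩ := hbdd
      exact hsum (summable_of_sum_le ha₀ fun s => (hb s).le)
    -- `1 - x ≤ exp (-x)` squeezes the partial products to `0`.
    refine HasProd.tprod_eq <| tendsto_of_tendsto_of_tendsto_of_le_of_le tendsto_const_nhds
      (Real.tendsto_exp_neg_atTop_nhds_zero.comp hunbdd)
      (fun s => Finset.prod_nonneg fun i _ => by linarith [ha₁ i]) fun s => ?_
    calc ∏ i ∈ s, (1 - a i) ≤ ∏ i ∈ s, Real.exp (-a i) :=
          Finset.prod_le_prod (fun i _ => by linarith [ha₁ i]) fun i _ => Real.one_sub_le_exp_neg _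
      _ = Real.exp (-∑ i ∈ s, a i) := by rw [← Real.exp_sum, Finset.sum_neg_distrib]

lemma isTheta_comp_of_isTheta_rpow {F : ℝ → ℝ} {u : ℕ → ℝ} {α β : ℝ} (hβ : 0 < β)
    (hF : F =Θ[𝓝[>] 0] fun q => q ^ α) (hu_pos : ∀ n, 0 < u n)
    (hu : u =Θ[atTop] fun n => (n : ℝ) ^ (-β)) :
    (fun n => F (u n)) =Θ[atTop] fun n => (n : ℝ) ^ (-(α * β)) := by
  have hu_tendsto : Tendsto u atTop (𝓝[>] 0) :=
    tendsto_nhdsWithin_iff.2 ⟨hu.tendsto_zero_iff.2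
      ((tendsto_rpow_neg_atTop hβ).comp tendsto_natCast_atTop_atTop), .of_forall hu_pos⟩
  have hu_rpow : (fun n => u n ^ α) =Θ[atTop] fun n => ((n : ℝ) ^ (-β)) ^ α :=
    hu.rpow (.of_forall fun n => (hu_pos n).le) (.of_forall fun n => by positivity)
  have hF_comp : (fun n => F (u n)) =Θ[atTop] fun n => u n ^ α :=
    ⟨hF.1.comp_tendsto hu_tendsto, hF.2.comp_tendsto hu_tendsto⟩
  refine (hF_comp.trans hu_rpow).trans_eventuallyEq (.of_forall fun n => ?_)
  simp only [← Real.rpow_mul n.cast_nonneg, mul_neg, mul_comm]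

theorem stmt15_general (Fℓ : ℝ → ℝ) (pt : ℕ → ℝ) (α αt : ℝ) (ξ : ℝ)
    (hαt : 0 < αt)
    (hFℓ01 : ∀ q ∈ Set.Icc (0:ℝ) 1, Fℓ q ∈ Set.Icc (0:ℝ) 1)
    (hFℓΘ : ∃ c C q₀ : ℝ, 0 < c ∧ c ≤ C ∧ 0 < q₀ ∧
      ∀ q ∈ Set.Ioo (0:ℝ) q₀, c * q ^ α ≤ Fℓ q ∧ Fℓ q ≤ C * q ^ α)
    (hpt : ∀ n, pt n ∈ Set.Ioo (0:ℝ) 1)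
    (hptΘ : ∃ c C : ℝ, 0 < c ∧ c ≤ C ∧ ∀ n : ℕ, 1 ≤ n →
      c * (n : ℝ) ^ (-(1 / αt)) ≤ 1 - pt n ∧ 1 - pt n ≤ C * (n : ℝ) ^ (-(1 / αt)))
    (hlt1 : ∀ n, Fℓ (1 - pt n) < 1)
    (hξ : ξ = ∏' n : ℕ, (1 - Fℓ (1 - pt n))) :
    ξ = 0 ↔ α ≤ αt := by
  obtain ⟨c, C, q₀, hc, -, hq₀, hFℓb⟩ := hFℓΘ
  obtain ⟨c', C', hc', -, hptb⟩ := hptΘ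
  have hq : ∀ n, 1 - pt n ∈ Set.Ioo (0:ℝ) 1 := fun n =>
    ⟨by linarith [(hpt n).2], by linarith [(hpt n).1]⟩
  have hFℓ : Fℓ =Θ[𝓝[>] 0] fun q => q ^ α :=
    isTheta_of_mul_le_of_le_mul hc
      (eventually_nhdsWithin_of_forall fun q hq => Real.rpow_nonneg (le_of_lt hq) α)
      (mem_of_superset (Ioo_mem_nhdsGT hq₀) hFℓb)
  have hu : (fun n => 1 - pt n) =Θ[atTop] fun n : ℕ => (n : ℝ) ^ (-(1 / αt)) :=
    isTheta_of_mul_le_of_le_mul hc' (.of_forall fun n => by positivity)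
      ((eventually_ge_atTop 1).mono hptb)
  have hsum : Summable (fun n => Fℓ (1 - pt n)) ↔ αt < α := by
    rw [(isTheta_comp_of_isTheta_rpow (by positivity) hFℓ (fun n => (hq n).1) hu).summable_iff_nat,
      Real.summable_nat_rpow, neg_lt_neg_iff, mul_one_div, one_lt_div hαt]
  rw [hξ, tprod_one_sub_eq_zero_iff_not_summable
    (fun n => (hFℓ01 _ ⟨(hq n).1.le, (hq n).2.le⟩).1) hlt1, hsum, not_lt]

/-- In the (symmetric) herding model with true tail exponent `α` and
misspecified exponent `αt` — i.e. `Fℓ q = Θ(q^α)` near 0 and the misspecified public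
beliefs `pt n` on the all-high-action path started at `1 − π` satisfy
`1 − pt n = Θ(n^{−1/αt})` — the probability, conditional on the high state, of an
immediate wrong herd, `ξ(π) = ∏_n (1 − Fℓ (1 − pt n))`, is zero iff `αt ≥ α`. -/
theorem stmt15 (Fℓ : ℝ → ℝ) (pt : ℕ → ℝ) (α αt π : ℝ) (ξ : ℝ)
    (hα : 0 < α) (hαt : 0 < αt) (hπ : π ∈ Set.Ioo (0:ℝ) 1)
    (hFℓ01 : ∀ q ∈ Set.Icc (0:ℝ) 1, Fℓ q ∈ Set.Icc (0:ℝ) 1)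
    (hFℓΘ : ∃ c C q₀ : ℝ, 0 < c ∧ c ≤ C ∧ 0 < q₀ ∧
      ∀ q ∈ Set.Ioo (0:ℝ) q₀, c * q ^ α ≤ Fℓ q ∧ Fℓ q ≤ C * q ^ α)
    (hpt0 : pt 0 = 1 - π)
    (hpt : ∀ n, pt n ∈ Set.Ioo (0:ℝ) 1)
    (hptΘ : ∃ c C : ℝ, 0 < c ∧ c ≤ C ∧ ∀ n : ℕ, 1 ≤ n →
      c * (n : ℝ) ^ (-(1 / αt)) ≤ 1 - pt n ∧ 1 - pt n ≤ C * (n : ℝ) ^ (-(1 / αt)))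
    (hlt1 : ∀ n, Fℓ (1 - pt n) < 1)
    (hξ : ξ = ∏' n : ℕ, (1 - Fℓ (1 - pt n))) :
    ξ = 0 ↔ α ≤ αt :=
  stmt15_general Fℓ pt α αt ξ hαt hFℓ01 hFℓΘ hpt hptΘ hlt1 hξ
end

section
/- Let (r_n) satisfy r_{n+1} = r_n + U(r̃_n) with r_1 ≥ 0, where U(r) ≥ c·e^{−αr} for some c > 0, and r̃_n is an increasing sequence with r̃_n ≤ α̃^{−1} log(K + 2Cα̃ n) for constants K, C > 0. If α̃ > α, then ∑_{n≥1} e^{−r_n} < ∞. -/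
/-!
Since `r̃` is increasing, each of the first `n` increments `U (r̃_k)` is at least
`c e^{-α r̃_n} ≥ c (K + 2Cα̃ n)^{-α/α̃} ≥ c' n^{-α/α̃}` with `c' = c (K + 2Cα̃)^{-α/α̃}`, so telescoping gives
`r_{n+1} ≥ c' n^{1 - α/α̃}`. As `α/α̃ < 1` this eventually exceeds `2 log n`, and
`e^{-r_{n+1}} ≤ n^{-2}` is summable.
-/

open Filter Real

lemma rpow_neg_div_le_exp_neg_mul {α αt x y : ℝ} (hα : 0 ≤ α) (hy : 0 < y)
    (hx : x ≤ αt⁻¹ * log y) : y ^ (-(α / αt)) ≤ exp (-α * x) := by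
  rw [rpow_def_of_pos hy, exp_le_exp]
  have : α * x ≤ α * (αt⁻¹ * log y) := mul_le_mul_of_nonneg_left hx hα
  linarith [show α * (αt⁻¹ * log y) = log y * (α / αt) by ring]

lemma add_mul_le_of_forall_add_le_succ {r : ℕ → ℝ} {a : ℝ} (m n : ℕ)
    (hstep : ∀ k < n, r (m + k) + a ≤ r (m + k + 1)) : r m + n * a ≤ r (m + n) := by
  induction n with
  | zero => simp
  | succ n ih =>
    have := hstep n n.lt_succ_self
    have := ih fun k hk => hstep k (hk.trans n.lt_succ_self)
    push_cast
    rw [← add_assoc]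
    linarith

lemma summable_exp_neg_of_mul_rpow_le {f : ℕ → ℝ} {a γ : ℝ} (ha : 0 < a) (hγ : 0 < γ)
    (hf : ∀ᶠ n : ℕ in atTop, a * (n : ℝ) ^ γ ≤ f n) :
    Summable fun n => exp (-f n) := by
  have hlog : ∀ᶠ n : ℕ in atTop, ‖log n‖ ≤ a / 2 * ‖(n : ℝ) ^ γ‖ :=
    tendsto_natCast_atTop_atTop.eventually ((isLittleO_log_rpow_atTop hγ).def (by positivity))
  refine (summable_nat_rpow.2 (by norm_num : (-2 : ℝ) < -1)).of_norm_bounded_eventually_nat ?_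
  filter_upwards [hf, hlog, eventually_ge_atTop 1] with n hfn hlogn hn
  have hn0 : (0 : ℝ) < n := by exact_mod_cast hn
  rw [norm_eq_abs, norm_eq_abs, abs_of_pos (rpow_pos_of_pos hn0 γ)] at hlogn
  rw [norm_eq_abs, abs_of_pos (exp_pos _), rpow_def_of_pos hn0, exp_le_exp]
  linarith [le_abs_self (log n)]

section IncrementBound

variable {r rt : ℕ → ℝ} {U : ℝ → ℝ} {c C K α αt : ℝ}

lemma mul_rpow_neg_le_increment (hα : 0 ≤ α) (hαt : 0 ≤ αt) (hc : 0 ≤ c) (hC : 0 ≤ C)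
    (hK : 0 < K) (hU : ∀ x : ℝ, c * exp (-α * x) ≤ U x) (hrtmono : Monotone rt)
    (hrtub : ∀ n : ℕ, 1 ≤ n → rt n ≤ αt⁻¹ * log (K + 2 * C * αt * n))
    {k n : ℕ} (hn : 1 ≤ n) (hkn : k ≤ n) :
    c * (K + 2 * C * αt) ^ (-(α / αt)) * (n : ℝ) ^ (-(α / αt)) ≤ U (rt k) := by
  have hn1 : (1 : ℝ) ≤ n := by exact_mod_cast hn
  have hpos : 0 < K + 2 * C * αt * n := by positivity
  have hlin : K + 2 * C * αt * n ≤ (K + 2 * C * αt) * n := by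
    nlinarith [mul_le_mul_of_nonneg_left hn1 hK.le]
  calc c * (K + 2 * C * αt) ^ (-(α / αt)) * (n : ℝ) ^ (-(α / αt))
      = c * ((K + 2 * C * αt) * n) ^ (-(α / αt)) := by
        rw [mul_rpow (by positivity) (by positivity), mul_assoc]
    _ ≤ c * (K + 2 * C * αt * n) ^ (-(α / αt)) := by
        gcongr c * ?_
        exact rpow_le_rpow_of_nonpos hpos hlin (neg_nonpos.2 (div_nonneg hα hαt))
    _ ≤ c * exp (-α * rt n) := by
        gcongr
        exact rpow_neg_div_le_exp_neg_mul hα hpos (hrtub n hn)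
    _ ≤ c * exp (-α * rt k) := by
        gcongr c * exp ?_
        nlinarith [hrtmono hkn]
    _ ≤ U (rt k) := hU _

lemma mul_rpow_le_of_increments (hα : 0 ≤ α) (hαt : 0 ≤ αt) (hc : 0 ≤ c) (hC : 0 ≤ C)
    (hK : 0 < K) (hr1 : 0 ≤ r 1) (hrec : ∀ n : ℕ, 1 ≤ n → r (n + 1) = r n + U (rt n))
    (hU : ∀ x : ℝ, c * exp (-α * x) ≤ U x) (hrtmono : Monotone rt)
    (hrtub : ∀ n : ℕ, 1 ≤ n → rt n ≤ αt⁻¹ * log (K + 2 * C * αt * n))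
    {n : ℕ} (hn : 1 ≤ n) :
    c * (K + 2 * C * αt) ^ (-(α / αt)) * (n : ℝ) ^ (1 - α / αt) ≤ r (n + 1) := by
  set a := c * (K + 2 * C * αt) ^ (-(α / αt)) * (n : ℝ) ^ (-(α / αt))
  have hsum := add_mul_le_of_forall_add_le_succ (r := r) (a := a) 1 n fun k hk => by
    rw [hrec (1 + k) (by omega)]
    gcongr
    exact mul_rpow_neg_le_increment hα hαt hc hC hK hU hrtmono hrtub hn (by omega)
  have hn0 : (0 : ℝ) < n := by exact_mod_cast hn
  rw [add_comm 1 n] at hsum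
  rw [sub_eq_add_neg, rpow_add hn0, rpow_one]
  linarith [show (n : ℝ) * a = c * (K + 2 * C * αt) ^ (-(α / αt)) * (n * n ^ (-(α / αt))) by ring]

end IncrementBound

/-- If `r_{n+1} = r_n + U (rt_n)` with `r_1 ≥ 0`, where
`U x ≥ c·e^{−α x}` (`c > 0`) and `rt` is increasing with
`rt_n ≤ αt⁻¹ log(K + 2·C·αt·n)` (`K, C > 0`), and `αt > α > 0`, then
`∑_{n≥1} e^{−r_n} < ∞`. -/
theorem stmt17 (r rt : ℕ → ℝ) (U : ℝ → ℝ) (c C K α αt : ℝ)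
    (hα : 0 < α) (hαt : α < αt) (hc : 0 < c) (hC : 0 < C) (hK : 0 < K)
    (hr1 : 0 ≤ r 1)
    (hrec : ∀ n : ℕ, 1 ≤ n → r (n + 1) = r n + U (rt n))
    (hU : ∀ x : ℝ, c * Real.exp (-α * x) ≤ U x)
    (hrtmono : Monotone rt)
    (hrtub : ∀ n : ℕ, 1 ≤ n → rt n ≤ αt⁻¹ * Real.log (K + 2 * C * αt * n)) :
    Summable (fun n : ℕ => Real.exp (-(r (n + 1)))) := by
  have hαt0 : 0 < αt := hα.trans hαt
  have hratio : α / αt < 1 := (div_lt_one hαt0).2 hαt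
  refine summable_exp_neg_of_mul_rpow_le (a := c * (K + 2 * C * αt) ^ (-(α / αt)))
    (by positivity) (sub_pos.2 hratio) ?_
  filter_upwards [eventually_ge_atTop 1] with n hn
  exact mul_rpow_le_of_increments hα.le hαt0.le hc.le hC.le hK hr1 hrec hU hrtmono hrtub hn
end
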